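/- arXiv:math/0309059 — 2 statements merged into one kernel-verified Lean document; each statement's English description precedes it below -/
import Mathlib

section
/- Let A be a C*-algebra, X a (right) Hilbert A-module and φ : A → B(X) a left action. Then the restriction of φ to J_X = φ⁻¹(K(X)) ∩ (ker φ)^⊥ is an injection of J_X into K(X); moreover J_X is the maximal such ideal: if J is any closed two-sided ideal of A with φ(J) ⊆ K(X) and φ restricted to J injective, then J ⊆ J_X. -/
open scoped RightActions

/-- The December 2024 Mathlib `CStarModule` (right Hilbert module, `SMul Aᵐᵒᵖ E`), whose name
Mathlib now uses for left Hilbert modules. -/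
class RightCStarModule (A E : Type*) [NonUnitalSemiring A] [StarRing A] [Module ℂ A]
    [AddCommGroup E] [Module ℂ E] [PartialOrder A] [SMul Aᵐᵒᵖ E] [Norm A] [Norm E]
    extends Inner A E where
  inner_add_right {x} {y} {z} : inner x (y + z) = inner x y + inner x z
  inner_self_nonneg {x} : 0 ≤ inner x x
  inner_self {x} : inner x x = 0 ↔ x = 0
  inner_op_smul_right {a : A} {x y : E} : inner x (y <• a) = inner x y * a
  inner_smul_right_complex {z : ℂ} {x} {y} : inner x (z • y) = z • inner x y
  star_inner x y : star (inner x y) = inner y x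
  norm_eq_sqrt_norm_inner_self x : ‖x‖ = √‖inner x x‖

variable {A X : Type*} [NonUnitalCStarAlgebra A] [PartialOrder A] [StarOrderedRing A]
  [NormedAddCommGroup X] [NormedSpace ℂ X] [SMul Aᵐᵒᵖ X] [RightCStarModule A X] [CompleteSpace X]

/-- `K(X)`: the closed linear span in `B(X)` of the rank-one operators
`θ_{ξ,η} : ζ ↦ ξ • ⟪η, ζ⟫`. -/
def compactOps (A X : Type*) [NonUnitalCStarAlgebra A] [PartialOrder A] [StarOrderedRing A]
    [NormedAddCommGroup X] [NormedSpace ℂ X] [SMul Aᵐᵒᵖ X] [RightCStarModule A X]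
    [CompleteSpace X] : Set (X →L[ℂ] X) :=
  closure (Submodule.span ℂ
    {T : X →L[ℂ] X | ∃ ξ η : X, ∀ ζ : X, T ζ = ξ <• (inner A η ζ : A)} : Set (X →L[ℂ] X))

/-- The ideal `J_X = φ⁻¹(K(X)) ∩ (ker φ)^⊥` of Katsura, as a subset of `A`. -/
def KatsuraIdeal (φ : A →ₙₐ[ℂ] (X →L[ℂ] X)) : Set A :=
  {a : A | φ a ∈ compactOps A X} ∩ {a : A | ∀ b : A, φ b = 0 → a * b = 0}

/-! A difference `c` of two elements of `(ker φ)^⊥` lies in `(ker φ)^⊥`, and if moreover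
`φ c = 0` then also `φ c* = 0` (as `⟪φ(c*)ξ, η⟫ = ⟪ξ, φ(c)η⟫`), so `c c* = 0` and `c = 0` by the
C*-identity. Conversely, if `φ` is injective on an ideal `J ∋ a` and `φ b = 0`, then `ab ∈ J`
and `φ(ab) = 0 = φ 0`, so `ab = 0`. -/

namespace RightCStarModule

variable {R E : Type*} [NonUnitalSemiring R] [StarRing R] [Module ℂ R] [PartialOrder R] [Norm R]
  [AddCommGroup E] [Module ℂ E] [SMul Rᵐᵒᵖ E] [Norm E] [RightCStarModule R E]

theorem inner_zero_right (x : E) : inner R x (0 : E) = 0 := by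
  simpa using inner_smul_right_complex (A := R) (z := 0) (x := x) (y := x)

theorem eq_zero_of_forall_inner_eq_zero {x : E} (h : ∀ y : E, inner R x y = 0) : x = 0 :=
  inner_self.mp (h x)

end RightCStarModule

theorem map_star_eq_zero_of_map_eq_zero {R E : Type*} [NonUnitalSemiring R] [StarRing R]
    [Module ℂ R] [PartialOrder R] [Norm R] [NormedAddCommGroup E] [NormedSpace ℂ E]
    [SMul Rᵐᵒᵖ E] [RightCStarModule R E] (φ : R → E →L[ℂ] E)
    (hadj : ∀ (a : R) (ξ η : E), inner R (φ a ξ) η = inner R ξ (φ (star a) η))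
    {c : R} (hc : φ c = 0) : φ (star c) = 0 := by
  ext ξ
  refine RightCStarModule.eq_zero_of_forall_inner_eq_zero (R := R) fun η => ?_
  rw [hadj, star_star, hc, zero_apply, RightCStarModule.inner_zero_right]

theorem injOn_setOf_forall_map_eq_zero_imp_mul_eq_zero {R S F : Type*} [NonUnitalNormedRing R]
    [StarRing R] [CStarRing R] [AddGroup S] [FunLike F R S] [AddMonoidHomClass F R S] (f : F)
    (hstar : ∀ c, f c = 0 → f (star c) = 0) :
    Set.InjOn f {a | ∀ b, f b = 0 → a * b = 0} := by
  intro a ha b hb hab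
  have hker : f (star (a - b)) = 0 := hstar _ (by rw [map_sub, hab, sub_self])
  have hsq : (a - b) * star (a - b) = 0 := by rw [sub_mul, ha _ hker, hb _ hker, sub_self]
  exact sub_eq_zero.mp ((CStarRing.mul_star_self_eq_zero_iff _).mp hsq)

theorem TwoSidedIdeal.mul_eq_zero_of_injOn {R S F : Type*} [NonUnitalNonAssocRing R]
    [NonUnitalNonAssocSemiring S] [FunLike F R S] [NonUnitalRingHomClass F R S] {f : F}
    {J : TwoSidedIdeal R} (hJ : Set.InjOn f J) {a b : R} (ha : a ∈ J) (hb : f b = 0) :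
    a * b = 0 :=
  hJ (J.mul_mem_right a b ha) J.zero_mem (by rw [map_mul, hb, mul_zero, map_zero])

theorem katsuraIdeal_injOn_and_maximal_general (φ : A →ₙₐ[ℂ] (X →L[ℂ] X))
    (hadj : ∀ (a : A) (ξ η : X), (inner A (φ a ξ) η : A) = inner A ξ (φ (star a) η)) :
    Set.InjOn φ (KatsuraIdeal φ) ∧ (∀ a ∈ KatsuraIdeal φ, φ a ∈ compactOps A X) ∧
      ∀ J : TwoSidedIdeal A, IsClosed (J : Set A) →
        (∀ a ∈ J, φ a ∈ compactOps A X) → Set.InjOn φ (J : Set A) →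
        (J : Set A) ⊆ KatsuraIdeal φ := by
  have hstar : ∀ c, φ c = 0 → φ (star c) = 0 := fun _ =>
    map_star_eq_zero_of_map_eq_zero φ hadj
  refine ⟨?_, fun a ha => ha.1, fun J _ hJK hJinj a ha => ⟨hJK a ha, fun b hb => ?_⟩⟩
  · exact (injOn_setOf_forall_map_eq_zero_imp_mul_eq_zero φ hstar).mono fun a ha => ha.2
  · exact TwoSidedIdeal.mul_eq_zero_of_injOn hJinj ha hb

/-- For a left action `φ` of `A` on a Hilbert `A`-module `X`, the restriction of `φ` to
`J_X = φ⁻¹(K(X)) ∩ (ker φ)^⊥` is an injection of `J_X` into `K(X)`, and `J_X` is maximal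
with this property: any closed two-sided ideal `J` with `φ(J) ⊆ K(X)` and `φ` injective on
`J` satisfies `J ⊆ J_X`. -/
theorem katsuraIdeal_injOn_and_maximal (φ : A →ₙₐ[ℂ] (X →L[ℂ] X))
    (hmod : ∀ (a : A) (ξ : X) (b : A), φ a (ξ <• b) = (φ a ξ) <• b)
    (hadj : ∀ (a : A) (ξ η : X), (inner A (φ a ξ) η : A) = inner A ξ (φ (star a) η)) :
    Set.InjOn φ (KatsuraIdeal φ) ∧ (∀ a ∈ KatsuraIdeal φ, φ a ∈ compactOps A X) ∧
      ∀ J : TwoSidedIdeal A, IsClosed (J : Set A) →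
        (∀ a ∈ J, φ a ∈ compactOps A X) → Set.InjOn φ (J : Set A) →
        (J : Set A) ⊆ KatsuraIdeal φ :=
  katsuraIdeal_injOn_and_maximal_general φ hadj
end

section
/- Let (X, φ, ⟨⟨·,·⟩⟩) be a Hilbert A-bimodule over a C*-algebra A. Then φ is injective if and only if the ideal I_X is essential in A, i.e. I_X^⊥ = {0}, where I_X is the closed linear span of {⟨⟨ξ,η⟩⟩ : ξ,η ∈ X} and I_X^⊥ = {a ∈ A : ab = 0 for all b ∈ I_X}. -/
open scoped RightActions

/-- The definition of `CStarModule` as it stood in Mathlib (December 2024): a Hilbert C⋆-module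
over `A` with a *right* action of `A` (via `Aᵐᵒᵖ`) and inner product `A`-linear on the right. -/
class CStarModuleOld (A E : Type*) [NonUnitalSemiring A] [StarRing A] [Module ℂ A]
    [AddCommGroup E] [Module ℂ E] [PartialOrder A] [SMul Aᵐᵒᵖ E] [Norm A] [Norm E]
    extends Inner A E where
  inner_add_right {x} {y} {z} : inner x (y + z) = inner x y + inner x z
  inner_self_nonneg {x} : 0 ≤ inner x x
  inner_self {x} : inner x x = 0 ↔ x = 0
  inner_op_smul_right {a : A} {x y : E} : inner x (y <• a) = inner x y * a
  inner_smul_right_complex {z : ℂ} {x} {y} : inner x (z • y) = z • inner x y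
  star_inner x y : star (inner x y) = inner y x
  norm_eq_sqrt_norm_inner_self x : ‖x‖ = √‖inner x x‖

variable {A X : Type*} [NonUnitalCStarAlgebra A] [PartialOrder A] [StarOrderedRing A]
  [NormedAddCommGroup X] [NormedSpace ℂ X] [SMul Aᵐᵒᵖ X] [CStarModuleOld A X] [CompleteSpace X]

/-! If `φ a = 0` then `a ⟨⟨ξ, η⟩⟩ = ⟨⟨φ a ξ, η⟩⟩ = 0`, so `a ∈ I_X^⊥`. Conversely, if
`a ∈ I_X^⊥` and `ζ = φ a ξ`, then `⟨⟨ζ, ζ⟩⟩ = a ⟨⟨ξ, ζ⟩⟩ = 0`, hence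
`ζ • ⟨ζ, ζ⟩ = φ ⟨⟨ζ, ζ⟩⟩ ζ = 0`; pairing with `ζ` gives `⟨ζ, ζ⟩* ⟨ζ, ζ⟩ = 0`, so `ζ = 0` by the
C⋆-identity. -/

namespace CStarModuleOld

variable {B E : Type*} [NonUnitalNormedRing B] [StarRing B] [Module ℂ B] [PartialOrder B]
  [AddCommGroup E] [Module ℂ E] [SMul Bᵐᵒᵖ E] [Norm E] [CStarModuleOld B E]

theorem inner_zero_left {y : E} : inner B (0 : E) y = 0 := by
  have h : inner B y (0 : E) = 0 := by
    simpa using inner_smul_right_complex (A := B) (z := (0 : ℂ)) (x := y) (y := (0 : E))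
  rw [← star_inner y 0, h, star_zero]

theorem inner_op_smul_left {a : B} {x y : E} : inner B (x <• a) y = star a * inner B x y := by
  rw [← star_inner y (x <• a), inner_op_smul_right, star_mul, star_inner]

theorem eq_zero_of_op_smul_inner_self_eq_zero [CStarRing B] {x : E}
    (h : x <• inner B x x = 0) : x = 0 := by
  have hsq : star (inner B x x) * inner B x x = 0 := by
    rw [← inner_op_smul_left, h, inner_zero_left]
  exact inner_self.mp ((CStarRing.star_mul_self_eq_zero_iff _).mp hsq)

end CStarModuleOld

theorem forall_mem_closure_span_mul_eq_zero_iff {R B : Type*} [Semiring R] [NonUnitalSemiring B]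
    [Module R B] [SMulCommClass R B B] [TopologicalSpace B] [ContinuousMul B] [T1Space B]
    {S : Set B} {a : B} :
    (∀ b ∈ closure (Submodule.span R S : Set B), a * b = 0) ↔ ∀ s ∈ S, a * s = 0 := by
  refine ⟨fun h s hs => h s (subset_closure (Submodule.subset_span hs)), fun h => ?_⟩
  have hspan : Submodule.span R S ≤ LinearMap.ker (LinearMap.mulLeft R a) :=
    Submodule.span_le.mpr h
  have hclosed : IsClosed ((a * ·) ⁻¹' {0} : Set B) :=
    isClosed_singleton.preimage (continuous_const_mul a)
  exact fun b hb => closure_minimal hspan hclosed hb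

theorem mul_leftInner_eq_zero_of_map_eq_zero {B E : Type*} [NonUnitalNonAssocSemiring B]
    [Module ℂ B] [NormedAddCommGroup E] [NormedSpace ℂ E] (φ : B →ₙₐ[ℂ] (E →L[ℂ] E)) (L : E → E → B)
    (h1 : ∀ (a : B) (ξ η : E), L (φ a ξ) η = a * L ξ η) {a : B} (ha : φ a = 0) (ξ η : E) :
    a * L ξ η = 0 := by
  rw [← h1, ha, ← map_zero φ, h1, zero_mul]

theorem map_eq_zero_of_forall_mul_leftInner_eq_zero {B E : Type*}
    [NonUnitalNormedRing B] [StarRing B] [CStarRing B] [Module ℂ B] [PartialOrder B]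
    [NormedAddCommGroup E] [NormedSpace ℂ E] [SMul Bᵐᵒᵖ E] [CStarModuleOld B E]
    (φ : B →ₙₐ[ℂ] (E →L[ℂ] E)) (L : E → E → B)
    (h1 : ∀ (a : B) (ξ η : E), L (φ a ξ) η = a * L ξ η)
    (h4 : ∀ ξ η ζ : E, φ (L ξ η) ζ = ξ <• (inner B η ζ : B)) {a : B}
    (ha : ∀ ξ η, a * L ξ η = 0) : φ a = 0 := by
  ext ξ
  have hL : L (φ a ξ) (φ a ξ) = 0 := by rw [h1, ha]
  refine CStarModuleOld.eq_zero_of_op_smul_inner_self_eq_zero (B := B) ?_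
  rw [← h4, hL, map_zero, zero_apply]

theorem bimodule_phi_injective_iff_IX_essential_general (φ : A →ₙₐ[ℂ] (X →L[ℂ] X))
    (L : X → X → A)
    (h1 : ∀ (a : A) (ξ η : X), L (φ a ξ) η = a * L ξ η)
    (h4 : ∀ ξ η ζ : X, φ (L ξ η) ζ = ξ <• (inner A η ζ : A)) :
    Function.Injective φ ↔
      {a : A | ∀ b ∈ closure
          (Submodule.span ℂ {x : A | ∃ ξ η : X, x = L ξ η} : Set A), a * b = 0}
        = {0} := by
  have mem_perp_iff : ∀ a : A, (∀ b ∈ closure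
      (Submodule.span ℂ {x : A | ∃ ξ η : X, x = L ξ η} : Set A), a * b = 0) ↔ φ a = 0 := by
    intro a
    rw [forall_mem_closure_span_mul_eq_zero_iff]
    refine ⟨fun ha => map_eq_zero_of_forall_mul_leftInner_eq_zero φ L h1 h4
      fun ξ η => ha _ ⟨ξ, η, rfl⟩, ?_⟩
    rintro ha _ ⟨ξ, η, rfl⟩
    exact mul_leftInner_eq_zero_of_map_eq_zero φ L h1 ha ξ η
  simp only [injective_iff_map_eq_zero', Set.ext_iff, Set.mem_ofPred_eq, mem_perp_iff,
    Set.mem_singleton_iff]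

/-- Let `(X, φ, L)` be a Hilbert `A`-bimodule (here `L ξ η = ⟨⟨ξ, η⟩⟩` is the left inner
product).  Then `φ` is injective if and only if the ideal `I_X` (the closed linear span of
`{⟨⟨ξ, η⟩⟩ : ξ, η ∈ X}`) is essential in `A`, i.e. `I_X^⊥ = {0}`. -/
theorem bimodule_phi_injective_iff_IX_essential (φ : A →ₙₐ[ℂ] (X →L[ℂ] X))
    (hmod : ∀ (a : A) (ξ : X) (b : A), φ a (ξ <• b) = (φ a ξ) <• b)
    (L : X → X → A)
    (hadd : ∀ ξ₁ ξ₂ η : X, L (ξ₁ + ξ₂) η = L ξ₁ η + L ξ₂ η)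
    (hsmul : ∀ (c : ℂ) (ξ η : X), L (c • ξ) η = c • L ξ η)
    (h1 : ∀ (a : A) (ξ η : X), L (φ a ξ) η = a * L ξ η)
    (h2 : ∀ ξ η : X, L ξ η = star (L η ξ))
    (h3 : ∀ ξ : X, 0 ≤ L ξ ξ)
    (h4 : ∀ ξ η ζ : X, φ (L ξ η) ζ = ξ <• (inner A η ζ : A)) :
    Function.Injective φ ↔
      {a : A | ∀ b ∈ closure
          (Submodule.span ℂ {x : A | ∃ ξ η : X, x = L ξ η} : Set A), a * b = 0}
        = {0} :=
  bimodule_phi_injective_iff_IX_essential_general φ L h1 h4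
end
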